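/- arXiv:2111.06346 — 4 statements merged into one kernel-verified Lean document; each statement's English description precedes it below -/
import Mathlib

section
/- Let U and V be nonzero subspaces of a finite-dimensional real inner product space, let P_V be the orthogonal projection onto V, and let cos θ₁ = sup{⟨u, v⟩ : u ∈ U, v ∈ V, ‖u‖ = ‖v‖ = 1} be the cosine of the minimal principal angle between U and V. Then for every ρ > 0, the infimum of ‖a − P_V a‖² over all a ∈ U with ‖a‖ = ρ equals ρ² (1 − cos² θ₁) = ρ² sin² θ₁. -/
/-!
Write `P` for the orthogonal projection onto `V`. For `v ∈ V` one has `⟪u, v⟫ = ⟪P u, v⟫`,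
so the supremum over unit `v ∈ V` of `⟪u, v⟫` is `‖P u‖` (attained at `P u / ‖P u‖`, or at any
unit vector of `V` when `P u = 0`). Hence `cos θ₁` is the maximum of `‖P u‖` over the unit
sphere of `U`, which is compact, and by homogeneity `‖P a‖ ≤ cos θ₁ ‖a‖` on `U` with equality
at a maximiser. Pythagoras, `‖a - P a‖² = ‖a‖² - ‖P a‖²`, turns this into the claimed minimum.
-/

open scoped RealInnerProductSpace

namespace Submodule

variable {E : Type*} [NormedAddCommGroup E] [InnerProductSpace ℝ E]

section Projection

variable (V : Submodule ℝ E) [V.HasOrthogonalProjection]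

theorem norm_sub_starProjection_sq (a : E) :
    ‖a - V.starProjection a‖ ^ 2 = ‖a‖ ^ 2 - ‖V.starProjection a‖ ^ 2 := by
  rw [← starProjection_orthogonal_val, V.norm_sq_eq_add_norm_sq_starProjection a]
  ring

theorem real_inner_starProjection_left_of_mem {v : E} (hv : v ∈ V) (a : E) :
    ⟪V.starProjection a, v⟫ = ⟪a, v⟫ := by
  rw [inner_starProjection_left_eq_right, starProjection_eq_self_iff.mpr hv]

theorem real_inner_le_norm_starProjection_mul_norm {v : E} (hv : v ∈ V) (a : E) :
    ⟪a, v⟫ ≤ ‖V.starProjection a‖ * ‖v‖ :=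
  V.real_inner_starProjection_left_of_mem hv a ▸ real_inner_le_norm _ _

theorem exists_norm_eq_one_real_inner_eq_norm_starProjection (hV : V ≠ ⊥) (a : E) :
    ∃ v ∈ V, ‖v‖ = 1 ∧ ⟪a, v⟫ = ‖V.starProjection a‖ := by
  by_cases hPa : V.starProjection a = 0
  · obtain ⟨v, hvV, hv0⟩ := exists_mem_ne_zero_of_ne_bot hV
    refine ⟨‖v‖⁻¹ • v, V.smul_mem _ hvV, norm_smul_inv_norm hv0, ?_⟩
    rw [← V.real_inner_starProjection_left_of_mem (V.smul_mem _ hvV), hPa, inner_zero_left,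
      norm_zero]
  · refine ⟨‖V.starProjection a‖⁻¹ • V.starProjection a,
      V.smul_mem _ (V.starProjection_apply_mem a), norm_smul_inv_norm hPa, ?_⟩
    rw [real_inner_smul_right,
      ← V.real_inner_starProjection_left_of_mem (V.starProjection_apply_mem a),
      real_inner_self_eq_norm_sq]
    field_simp [norm_ne_zero_iff.mpr hPa]

end Projection

variable (U V : Submodule ℝ E) [V.HasOrthogonalProjection]

theorem exists_norm_eq_one_forall_norm_starProjection_le [FiniteDimensional ℝ U] (hU : U ≠ ⊥) :
    ∃ u ∈ U, ‖u‖ = 1 ∧ ∀ a ∈ U, ‖V.starProjection a‖ ≤ ‖V.starProjection u‖ * ‖a‖ := by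
  have : Nontrivial U := nontrivial_iff_ne_bot.mpr hU
  obtain ⟨u, hu, hmax⟩ := (isCompact_sphere (0 : U) 1).exists_isMaxOn
    ((NormedSpace.sphere_nonempty).mpr zero_le_one)
    (continuous_norm.comp (V.starProjection.continuous.comp continuous_subtype_val)).continuousOn
  have hu1 : ‖(u : E)‖ = 1 := by simpa using hu
  refine ⟨u, u.2, hu1, fun a ha => ?_⟩
  rcases eq_or_ne a 0 with rfl | ha0
  · simp
  have hw : (⟨‖a‖⁻¹ • a, U.smul_mem _ ha⟩ : U) ∈ Metric.sphere (0 : U) 1 := by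
    simp [norm_smul, ha0]
  calc ‖V.starProjection a‖ = ‖V.starProjection (‖a‖⁻¹ • a)‖ * ‖a‖ := by
        rw [map_smul, norm_smul, norm_inv, norm_norm]
        field_simp [norm_ne_zero_iff.mpr ha0]
    _ ≤ ‖V.starProjection u‖ * ‖a‖ := by gcongr; exact hmax hw

theorem isGreatest_real_inner_of_forall_norm_starProjection_le (hV : V ≠ ⊥) {u₀ : E}
    (hu₀ : u₀ ∈ U) (hu₀1 : ‖u₀‖ = 1)
    (hmax : ∀ a ∈ U, ‖V.starProjection a‖ ≤ ‖V.starProjection u₀‖ * ‖a‖) :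
    IsGreatest {x : ℝ | ∃ u ∈ U, ∃ v ∈ V, ‖u‖ = 1 ∧ ‖v‖ = 1 ∧ ⟪u, v⟫ = x}
      ‖V.starProjection u₀‖ := by
  refine ⟨?_, ?_⟩
  · obtain ⟨v, hvV, hv1, hv⟩ := V.exists_norm_eq_one_real_inner_eq_norm_starProjection hV u₀
    exact ⟨u₀, hu₀, v, hvV, hu₀1, hv1, hv⟩
  · rintro _ ⟨u, huU, v, hvV, hu1, hv1, rfl⟩
    calc ⟪u, v⟫ ≤ ‖V.starProjection u‖ * ‖v‖ := V.real_inner_le_norm_starProjection_mul_norm hvV u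
      _ ≤ ‖V.starProjection u₀‖ := by simpa [hu1, hv1] using hmax u huU

theorem isLeast_norm_sub_starProjection_sq {u₀ : E} (hu₀ : u₀ ∈ U) (hu₀1 : ‖u₀‖ = 1)
    (hmax : ∀ a ∈ U, ‖V.starProjection a‖ ≤ ‖V.starProjection u₀‖ * ‖a‖) {ρ : ℝ} (hρ : 0 ≤ ρ) :
    IsLeast {y : ℝ | ∃ a ∈ U, ‖a‖ = ρ ∧ y = ‖a - V.starProjection a‖ ^ 2}
      (ρ ^ 2 * (1 - ‖V.starProjection u₀‖ ^ 2)) := by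
  refine ⟨⟨ρ • u₀, U.smul_mem ρ hu₀, ?_, ?_⟩, ?_⟩
  · rw [norm_smul, Real.norm_of_nonneg hρ, hu₀1, mul_one]
  · rw [norm_sub_starProjection_sq, map_smul, norm_smul, norm_smul, Real.norm_of_nonneg hρ, hu₀1]
    ring
  · rintro _ ⟨a, haU, rfl, rfl⟩
    have hPa := hmax a haU
    rw [norm_sub_starProjection_sq]
    nlinarith [norm_nonneg (V.starProjection a)]

end Submodule

/-- For nonzero subspaces `U, V` of a finite-dimensional real inner product
space, with `cos θ₁ = sup{⟪u,v⟫ : u ∈ U, v ∈ V, ‖u‖ = ‖v‖ = 1}`, and every `ρ > 0`: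
the infimum of `‖a − P_V a‖²` over `a ∈ U` with `‖a‖ = ρ` equals `ρ²(1 − cos²θ₁)`. -/
theorem weakest_point_inf (E : Type*) [NormedAddCommGroup E] [InnerProductSpace ℝ E]
    [FiniteDimensional ℝ E] (U V : Submodule ℝ E) (hU : U ≠ ⊥) (hV : V ≠ ⊥)
    (c : ℝ)
    (hc : c = sSup {x : ℝ | ∃ u ∈ U, ∃ v ∈ V, ‖u‖ = 1 ∧ ‖v‖ = 1 ∧ ⟪u, v⟫ = x})
    (ρ : ℝ) (hρ : 0 < ρ) :
    sInf {y : ℝ | ∃ a ∈ U, ‖a‖ = ρ ∧ y = ‖a - (V.orthogonalProjection a : E)‖ ^ 2}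
      = ρ ^ 2 * (1 - c ^ 2) := by
  obtain ⟨u₀, hu₀, hu₀1, hmax⟩ := U.exists_norm_eq_one_forall_norm_starProjection_le V hU
  rw [hc, (U.isGreatest_real_inner_of_forall_norm_starProjection_le V hV hu₀ hu₀1 hmax).csSup_eq]
  exact (U.isLeast_norm_sub_starProjection_sq V hu₀ hu₀1 hmax hρ.le).csInf_eq
end

section
/- Let U and V be nonzero subspaces of a finite-dimensional real inner product space, with orthogonal projections P_U and P_V. Then the operator norm of the composition P_U ∘ P_V equals sup{⟨u, v⟩ : u ∈ U, v ∈ V, ‖u‖ = ‖v‖ = 1}, i.e., ‖P_U P_V‖ = cos θ₁, the cosine of the minimal principal angle between U and V. -/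
open scoped RealInnerProductSpace

/-!
For unit vectors `u ∈ U`, `v ∈ V` we have `⟪u, v⟫ = ⟪u, P_U P_V v⟫ ≤ ‖P_U P_V‖`. Conversely, the
supremum `c` scales to `⟪u, v⟫ ≤ c ‖u‖ ‖v‖` on all of `U × V`, and `w = P_U P_V x ∈ U` satisfies
`‖w‖² = ⟪w, P_V x⟫ ≤ c ‖w‖ ‖P_V x‖ ≤ c ‖w‖ ‖x‖`, so `‖P_U P_V‖ ≤ c`.
-/

namespace Submodule

variable {E : Type*} [NormedAddCommGroup E] [InnerProductSpace ℝ E]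

theorem real_inner_starProjection_of_mem_left (K : Submodule ℝ E) [K.HasOrthogonalProjection]
    {u : E} (hu : u ∈ K) (y : E) : ⟪u, K.starProjection y⟫ = ⟪u, y⟫ := by
  rw [← inner_starProjection_left_eq_right, starProjection_eq_self_iff.mpr hu]

noncomputable def cosMinAngle (U V : Submodule ℝ E) : ℝ :=
  sSup {x : ℝ | ∃ u ∈ U, ∃ v ∈ V, ‖u‖ = 1 ∧ ‖v‖ = 1 ∧ ⟪u, v⟫ = x}

variable (U V : Submodule ℝ E)

theorem bddAbove_inner_unit :
    BddAbove {x : ℝ | ∃ u ∈ U, ∃ v ∈ V, ‖u‖ = 1 ∧ ‖v‖ = 1 ∧ ⟪u, v⟫ = x} := by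
  refine ⟨1, ?_⟩
  rintro _ ⟨u, -, v, -, hu, hv, rfl⟩
  simpa [hu, hv] using real_inner_le_norm u v

theorem inner_le_cosMinAngle {u v : E} (hu : u ∈ U) (hv : v ∈ V) (hu1 : ‖u‖ = 1)
    (hv1 : ‖v‖ = 1) : ⟪u, v⟫ ≤ U.cosMinAngle V :=
  le_csSup (bddAbove_inner_unit U V) ⟨u, hu, v, hv, hu1, hv1, rfl⟩

theorem inner_le_cosMinAngle_mul {u v : E} (hu : u ∈ U) (hv : v ∈ V) :
    ⟪u, v⟫ ≤ U.cosMinAngle V * (‖u‖ * ‖v‖) := by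
  rcases eq_or_ne u 0 with rfl | hu0
  · simp
  rcases eq_or_ne v 0 with rfl | hv0
  · simp
  have hunit := inner_le_cosMinAngle U V (U.smul_mem ‖u‖⁻¹ hu) (V.smul_mem ‖v‖⁻¹ hv)
    (norm_smul_inv_norm hu0) (norm_smul_inv_norm hv0)
  rw [real_inner_smul_left, real_inner_smul_right, ← mul_assoc, ← mul_inv,
    inv_mul_le_iff₀ (by positivity)] at hunit
  linarith

theorem cosMinAngle_nonneg (hU : U ≠ ⊥) (hV : V ≠ ⊥) : 0 ≤ U.cosMinAngle V := by
  obtain ⟨u, hu, hu0⟩ := exists_mem_ne_zero_of_ne_bot hU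
  obtain ⟨v, hv, hv0⟩ := exists_mem_ne_zero_of_ne_bot hV
  have hpos := inner_le_cosMinAngle_mul U V hu hv
  have hneg := inner_le_cosMinAngle_mul U V (U.neg_mem hu) hv
  rw [inner_neg_left, norm_neg] at hneg
  have : 0 < ‖u‖ * ‖v‖ := by positivity
  nlinarith

variable [U.HasOrthogonalProjection] [V.HasOrthogonalProjection]

theorem cosMinAngle_le_opNorm_starProjection_comp :
    U.cosMinAngle V ≤ ‖U.starProjection ∘L V.starProjection‖ := by
  refine Real.sSup_le ?_ (norm_nonneg _)
  rintro _ ⟨u, hu, v, hv, hu1, hv1, rfl⟩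
  calc ⟪u, v⟫ = ⟪u, (U.starProjection ∘L V.starProjection) v⟫ := by
        rw [ContinuousLinearMap.comp_apply, real_inner_starProjection_of_mem_left U hu,
          starProjection_eq_self_iff.mpr hv]
    _ ≤ ‖u‖ * ‖(U.starProjection ∘L V.starProjection) v‖ := real_inner_le_norm _ _
    _ ≤ ‖U.starProjection ∘L V.starProjection‖ := by
        simpa [hu1, hv1] using (U.starProjection ∘L V.starProjection).le_opNorm v

theorem norm_starProjection_starProjection_le (hU : U ≠ ⊥) (hV : V ≠ ⊥) (x : E) :
    ‖U.starProjection (V.starProjection x)‖ ≤ U.cosMinAngle V * ‖x‖ := by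
  set y := V.starProjection x
  set w := U.starProjection y
  have hc := cosMinAngle_nonneg U V hU hV
  have hsq : ‖w‖ * ‖w‖ ≤ ‖w‖ * (U.cosMinAngle V * ‖x‖) :=
    calc ‖w‖ * ‖w‖ = ⟪w, y⟫ := by
          rw [← real_inner_self_eq_norm_mul_norm,
            real_inner_starProjection_of_mem_left U (U.starProjection_apply_mem y)]
      _ ≤ U.cosMinAngle V * (‖w‖ * ‖y‖) :=
          inner_le_cosMinAngle_mul U V (U.starProjection_apply_mem y) (V.starProjection_apply_mem x)
      _ ≤ U.cosMinAngle V * (‖w‖ * ‖x‖) := by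
          gcongr
          exact V.norm_starProjection_apply_le x
      _ = ‖w‖ * (U.cosMinAngle V * ‖x‖) := by ring
  rcases (norm_nonneg w).eq_or_lt with hw | hw
  · rw [← hw]
    positivity
  · exact le_of_mul_le_mul_left hsq hw

end Submodule

/-- For nonzero subspaces `U, V` of a finite-dimensional real inner product
space with orthogonal projections `P_U, P_V`, the operator norm of `P_U ∘ P_V` equals
`sup{⟪u,v⟫ : u ∈ U, v ∈ V, ‖u‖ = ‖v‖ = 1}`, the cosine of the minimal principal angle. -/
theorem opNorm_proj_comp_proj (E : Type*) [NormedAddCommGroup E] [InnerProductSpace ℝ E]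
    [FiniteDimensional ℝ E] (U V : Submodule ℝ E) (hU : U ≠ ⊥) (hV : V ≠ ⊥) :
    ‖(U.subtypeL.comp U.orthogonalProjectionOnto).comp
        (V.subtypeL.comp V.orthogonalProjectionOnto)‖
      = sSup {x : ℝ | ∃ u ∈ U, ∃ v ∈ V, ‖u‖ = 1 ∧ ‖v‖ = 1 ∧ ⟪u, v⟫ = x} :=
  le_antisymm
    ((U.starProjection ∘L V.starProjection).opNorm_le_bound
      (Submodule.cosMinAngle_nonneg U V hU hV)
      (Submodule.norm_starProjection_starProjection_le U V hU hV))
    (Submodule.cosMinAngle_le_opNorm_starProjection_comp U V)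
end

section
/- Let U and V be subspaces of a finite-dimensional real inner product space, let W = U ∩ V, and let U ⊖ W = U ∩ W^⊥ and V ⊖ W = V ∩ W^⊥ denote the orthogonal complements of W inside U and V respectively. Then the orthogonal projections satisfy P_U ∘ P_V = P_W + P_{U⊖W} ∘ P_{V⊖W}; equivalently, P_U P_V − P_{U∩V} = P_{U⊖W} P_{V⊖W}. -/
/-! Since `W ≤ V`, the subspace `V` is the orthogonal sum of `W` and `V ⊓ Wᗮ`, so
`P_V = P_W + P_{V ⊓ Wᗮ}`, and likewise `P_U = P_W + P_{U ⊓ Wᗮ}`. Expanding the product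
`(P_W + P_{U ⊓ Wᗮ}) (P_W + P_{V ⊓ Wᗮ})`, both cross terms vanish because `W ⟂ Wᗮ`,
and `P_W P_W = P_W`. -/

open Submodule

namespace Submodule

variable {𝕜 E : Type*} [RCLike 𝕜] [NormedAddCommGroup E] [InnerProductSpace 𝕜 E]

theorem IsOrtho.starProjection_sup {U V : Submodule 𝕜 E} (h : U ⟂ V)
    [U.HasOrthogonalProjection] [V.HasOrthogonalProjection] [(U ⊔ V).HasOrthogonalProjection] :
    (U ⊔ V).starProjection = U.starProjection + V.starProjection := by
  ext x
  refine eq_starProjection_of_mem_of_inner_eq_zero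
    (add_mem_sup (starProjection_apply_mem U x) (starProjection_apply_mem V x)) ?_
  rintro _ hw
  obtain ⟨u, hu, v, hv, rfl⟩ := mem_sup.1 hw
  have hVu : inner 𝕜 (V.starProjection x) u = 0 := h.symm.inner_eq (starProjection_apply_mem V x) hu
  have hUv : inner 𝕜 (U.starProjection x) v = 0 := h.inner_eq (starProjection_apply_mem U x) hv
  have hu' := starProjection_inner_eq_zero x u hu
  have hv' := starProjection_inner_eq_zero x v hv
  simp only [add_apply, inner_add_right, inner_sub_left, inner_add_left] at hu' hv' ⊢
  linear_combination hu' + hv' - hVu - hUv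

theorem starProjection_eq_add_starProjection_inf_orthogonal {W V : Submodule 𝕜 E} (h : W ≤ V)
    [W.HasOrthogonalProjection] [V.HasOrthogonalProjection]
    [(V ⊓ Wᗮ).HasOrthogonalProjection] :
    V.starProjection = W.starProjection + (V ⊓ Wᗮ).starProjection := by
  have hsup : W ⊔ V ⊓ Wᗮ = V := by
    rw [inf_comm]; exact sup_orthogonal_inf_of_hasOrthogonalProjection h
  have : (W ⊔ V ⊓ Wᗮ).HasOrthogonalProjection := by rw [hsup]; infer_instance
  calc V.starProjection = (W ⊔ V ⊓ Wᗮ).starProjection := by congr 1; exact hsup.symm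
    _ = _ := ((isOrtho_orthogonal_right W).mono_right inf_le_right).starProjection_sup

end Submodule

/-- For subspaces `U, V` of a finite-dimensional real inner product space,
with `W = U ⊓ V`, `U ⊖ W = U ⊓ Wᗮ` and `V ⊖ W = V ⊓ Wᗮ`, the orthogonal projections satisfy
`P_U ∘ P_V = P_W + P_{U⊖W} ∘ P_{V⊖W}`. -/
theorem proj_comp_proj_decomposition (E : Type*) [NormedAddCommGroup E]
    [InnerProductSpace ℝ E] [FiniteDimensional ℝ E]
    (U V W : Submodule ℝ E) (hW : W = U ⊓ V) :
    (U.subtypeL.comp (Submodule.orthogonalProjectionOnto U)).comp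
        (V.subtypeL.comp (Submodule.orthogonalProjectionOnto V))
      = W.subtypeL.comp (Submodule.orthogonalProjectionOnto W)
        + ((U ⊓ Wᗮ).subtypeL.comp (Submodule.orthogonalProjectionOnto (U ⊓ Wᗮ))).comp
            ((V ⊓ Wᗮ).subtypeL.comp (Submodule.orthogonalProjectionOnto (V ⊓ Wᗮ))) := by
  change U.starProjection * V.starProjection
    = W.starProjection + (U ⊓ Wᗮ).starProjection * (V ⊓ Wᗮ).starProjection
  have hW_VW : W.starProjection * (V ⊓ Wᗮ).starProjection = 0 :=
    ((isOrtho_orthogonal_right W).mono_right inf_le_right).starProjection_comp_starProjection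
  have hUW_W : (U ⊓ Wᗮ).starProjection * W.starProjection = 0 :=
    ((isOrtho_orthogonal_right W).mono_right inf_le_right).symm.starProjection_comp_starProjection
  rw [starProjection_eq_add_starProjection_inf_orthogonal (hW ▸ inf_le_left : W ≤ U),
    starProjection_eq_add_starProjection_inf_orthogonal (hW ▸ inf_le_right : W ≤ V),
    add_mul, mul_add, mul_add, hW_VW, hUW_W, W.isIdempotentElem_starProjection.eq]
  abel
end

section
/- Let U and V be subspaces of ℝ^p with orthogonal projection matrices P_U and P_V, and let W = U ∩ V with k = dim W and orthogonal projection matrix P_W. Then the squared Frobenius norm satisfies ‖P_U P_V‖_F² ≥ k + ‖P_U P_V − P_W‖², where ‖·‖ is the spectral (operator) norm; hence the Frobenius norm objective upper-bounds the cosine of the smallest nonzero principal angle between U and V. -/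
/-!
Since `W ≤ U` and `W ≤ V`, the matrix `P_U P_V - P_W` annihilates the range of `P_W`, so in the
Frobenius inner product `P_U P_V = (P_U P_V - P_W) + P_W` is an orthogonal decomposition. Hence
`‖P_U P_V‖_F² = ‖P_U P_V - P_W‖_F² + ‖P_W‖_F²`, where `‖P_W‖_F² = tr (P_W P_Wᵀ) = tr P_W = k`, and
the spectral norm is bounded by the Frobenius norm.
-/

open Matrix

namespace Matrix

section Frobenius

open scoped Matrix.Norms.Frobenius

variable {𝕜 m n : Type*} [Fintype m] [Fintype n]

theorem frobenius_norm_sq_eq_sum {α : Type*} [SeminormedAddCommGroup α] (A : Matrix m n α) :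
    ‖A‖ ^ 2 = ∑ i, ∑ j, ‖A i j‖ ^ 2 := by
  rw [frobenius_norm_def, ← Real.rpow_natCast, ← Real.rpow_mul (by positivity)]
  norm_num [Real.rpow_two]

theorem opNorm_toEuclideanCLM_le_frobenius_norm [RCLike 𝕜] [DecidableEq n] (A : Matrix n n 𝕜) :
    ‖toEuclideanCLM (𝕜 := 𝕜) A‖ ≤ ‖A‖ := by
  refine ContinuousLinearMap.opNorm_le_bound _ (norm_nonneg _) fun x => ?_
  calc ‖toEuclideanCLM (𝕜 := 𝕜) A x‖ = ‖A * replicateCol Unit x.ofLp‖ := by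
        rw [← replicateCol_mulVec, frobenius_norm_replicateCol]; rfl
    _ ≤ ‖A‖ * ‖x‖ := by
        grw [frobenius_norm_mul, frobenius_norm_replicateCol]

theorem opNorm_toEuclideanCLM_sq_le_sum_sq [DecidableEq n] (A : Matrix n n ℝ) :
    ‖toEuclideanCLM (𝕜 := ℝ) A‖ ^ 2 ≤ ∑ i, ∑ j, A i j ^ 2 := by
  grw [opNorm_toEuclideanCLM_le_frobenius_norm, frobenius_norm_sq_eq_sum]
  simp only [Real.norm_eq_abs, sq_abs, le_refl]

end Frobenius

section SumSq

variable {m n : Type*} [Fintype m] [Fintype n]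

theorem sum_sq_eq_trace_mul_transpose (A : Matrix m n ℝ) :
    ∑ i, ∑ j, A i j ^ 2 = trace (A * Aᵀ) := by
  simp only [trace, diag, mul_apply, transpose_apply, sq]

theorem sum_sq_add_of_mul_transpose_eq_zero {A B : Matrix m n ℝ} (h : A * Bᵀ = 0) :
    ∑ i, ∑ j, (A + B) i j ^ 2 = ∑ i, ∑ j, A i j ^ 2 + ∑ i, ∑ j, B i j ^ 2 := by
  have h' : B * Aᵀ = 0 := by rw [← transpose_transpose B, ← transpose_mul, h, transpose_zero]
  simp only [sum_sq_eq_trace_mul_transpose, transpose_add, Matrix.add_mul, Matrix.mul_add, h, h',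
    trace_add, trace_zero]
  ring

end SumSq

section StarProjection

variable {𝕜 n : Type*} [RCLike 𝕜] [Fintype n] [DecidableEq n]
  {K L : Submodule 𝕜 (EuclideanSpace 𝕜 n)} {P Q : Matrix n n 𝕜}

theorem mul_eq_of_toEuclideanCLM_eq_starProjection_of_le
    (hP : toEuclideanCLM (𝕜 := 𝕜) P = K.starProjection)
    (hQ : toEuclideanCLM (𝕜 := 𝕜) Q = L.starProjection) (hLK : L ≤ K) : P * Q = Q := by
  apply EquivLike.injective (toEuclideanCLM (𝕜 := 𝕜) (n := n))
  rw [map_mul, hP, hQ]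
  ext1 x
  exact K.starProjection_eq_self_iff.mpr (hLK (L.starProjection_apply_mem x))

theorem isHermitian_of_toEuclideanCLM_eq_starProjection
    (hP : toEuclideanCLM (𝕜 := 𝕜) P = K.starProjection) : P.IsHermitian := by
  apply EquivLike.injective (toEuclideanCLM (𝕜 := 𝕜) (n := n))
  rw [← star_eq_conjTranspose, map_star, hP]
  exact isSelfAdjoint_starProjection K

theorem trace_eq_finrank_of_toEuclideanCLM_eq_starProjection
    (hP : toEuclideanCLM (𝕜 := 𝕜) P = K.starProjection) :
    P.trace = Module.finrank 𝕜 K := by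
  have hproj : LinearMap.IsProj K (toEuclideanLin P) := by
    refine ⟨fun x => ?_, fun x hx => ?_⟩ <;>
      rw [← coe_toEuclideanCLM_eq_toEuclideanLin, ContinuousLinearMap.coe_coe, hP]
    · exact K.starProjection_apply_mem x
    · exact K.starProjection_eq_self_iff.mpr hx
  rw [← hproj.trace, toEuclideanLin_eq_toLin_orthonormal, trace_toLin_eq]

end StarProjection

end Matrix

/-- For subspaces `U, V` of `ℝ^p` with orthogonal projection matrices
`P_U, P_V`, and `W = U ⊓ V` with `k = dim W` and projection matrix `P_W`:
`‖P_U P_V‖_F² ≥ k + ‖P_U P_V − P_W‖²`, where `‖·‖_F` is the Frobenius norm (squared Frobenius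
norm = sum of squared entries) and `‖·‖` the spectral (operator) norm. -/
theorem frobenius_sq_ge_dim_add_spectral_sq (p : ℕ)
    (U V W : Submodule ℝ (EuclideanSpace ℝ (Fin p))) (hW : W = U ⊓ V)
    (k : ℕ) (hk : k = Module.finrank ℝ W)
    (PU PV PW : Matrix (Fin p) (Fin p) ℝ)
    (hPU : Matrix.toEuclideanCLM (𝕜 := ℝ) PU
      = U.subtypeL.comp (U.orthogonalProjection))
    (hPV : Matrix.toEuclideanCLM (𝕜 := ℝ) PV
      = V.subtypeL.comp (V.orthogonalProjection))
    (hPW : Matrix.toEuclideanCLM (𝕜 := ℝ) PW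
      = W.subtypeL.comp (W.orthogonalProjection)) :
    (k : ℝ) + ‖Matrix.toEuclideanCLM (𝕜 := ℝ) (PU * PV - PW)‖ ^ 2
      ≤ ∑ i, ∑ j, ((PU * PV) i j) ^ 2 := by
  have hPW_symm : PWᵀ = PW := isHermitian_of_toEuclideanCLM_eq_starProjection hPW
  have hPW_idem : PW * PW = PW := mul_eq_of_toEuclideanCLM_eq_starProjection_of_le hPW hPW le_rfl
  have hPV_PW : PV * PW = PW :=
    mul_eq_of_toEuclideanCLM_eq_starProjection_of_le hPV hPW (hW ▸ inf_le_right)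
  have hPU_PW : PU * PW = PW :=
    mul_eq_of_toEuclideanCLM_eq_starProjection_of_le hPU hPW (hW ▸ inf_le_left)
  have horth : (PU * PV - PW) * PWᵀ = 0 := by
    rw [hPW_symm, sub_mul, mul_assoc, hPV_PW, hPU_PW, hPW_idem, sub_self]
  have hPW_sum_sq : ∑ i, ∑ j, PW i j ^ 2 = k := by
    rw [sum_sq_eq_trace_mul_transpose, hPW_symm, hPW_idem, hk,
      trace_eq_finrank_of_toEuclideanCLM_eq_starProjection hPW]
  have hpyth := sum_sq_add_of_mul_transpose_eq_zero horth
  rw [sub_add_cancel, hPW_sum_sq] at hpyth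
  linarith [opNorm_toEuclideanCLM_sq_le_sum_sq (PU * PV - PW)]
end
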